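/- arXiv:2401.00938 — 3 statements merged into one kernel-verified Lean document; each statement's English description precedes it below -/
import Mathlib

section
/- Let n > 1, a > 0, b > 0, g > 0, m = n, and define U(ξ) = (2ng/((n+1)a))^{1/(n−1)} · cos((n−1)/(2n) · √(a/b) · ξ)^{2/(n−1)} for |ξ| ≤ L where L = (n/(n−1))·√(b/a)·π. Then on the open interval (−L, L), U satisfies the equation −g·U' + a·(U^m)' + b·(U^n)''' = 0. -/
/-!
With `p = 2/(n-1)`, `D = 2ng/((n+1)a)` and `C = D^(1/(n-1))` one has `U = C cos(kξ)^p` and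
`U^n = D C cos(kξ)^(p+2)`. Where `cos(kξ) > 0`, i.e. on `(-L, L)`, the powers `f_q = cos(kξ)^q`
satisfy `f_q'' = q(q-1)k² f_(q-2) - q²k² f_q`, and the choice of `k` and `D` makes the
once-integrated equation `-gU + aU^n + b(U^n)'' = 0` an identity there; differentiating it gives
the travelling-wave equation.
-/

open Set Real Filter Topology

theorem third_order_eq_of_eventually_second_order_eq {U V : ℝ → ℝ} {a b g ξ : ℝ} (hb : b ≠ 0)
    (hU : DifferentiableAt ℝ U ξ) (hV : DifferentiableAt ℝ V ξ)
    (h : ∀ᶠ x in 𝓝 ξ, -g * U x + a * V x + b * deriv (deriv V) x = 0) :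
    -g * deriv U ξ + a * deriv V ξ + b * deriv (deriv (deriv V)) ξ = 0 := by
  have hV2 : deriv (deriv V) =ᶠ[𝓝 ξ] fun x => (g * U x - a * V x) / b := by
    filter_upwards [h] with x hx
    field_simp
    linarith
  have hV3 : HasDerivAt (fun x => (g * U x - a * V x) / b)
      ((g * deriv U ξ - a * deriv V ξ) / b) ξ :=
    ((hU.hasDerivAt.const_mul g).sub (hV.hasDerivAt.const_mul a)).div_const b
  rw [hV2.deriv_eq, hV3.deriv]
  field_simp
  ring

theorem hasDerivAt_cos_mul_rpow (k q x : ℝ) (hx : cos (k * x) ≠ 0) :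
    HasDerivAt (fun y => cos (k * y) ^ q) (-(q * k) * sin (k * x) * cos (k * x) ^ (q - 1)) x := by
  convert (hasDerivAt_const_mul k).cos.rpow_const (p := q) (Or.inl hx) using 1
  ring

theorem deriv_deriv_cos_mul_rpow (k q x : ℝ) (hx : 0 < cos (k * x)) :
    deriv (deriv fun y => cos (k * y) ^ q) x =
      q * (q - 1) * k ^ 2 * cos (k * x) ^ (q - 2) - q ^ 2 * k ^ 2 * cos (k * x) ^ q := by
  have hpos : ∀ᶠ y in 𝓝 x, 0 < cos (k * y) :=
    (continuous_cos.comp (continuous_const_mul k)).continuousAt.eventually (lt_mem_nhds hx)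
  have hderiv : deriv (fun y => cos (k * y) ^ q) =ᶠ[𝓝 x]
      fun y => -(q * k) * sin (k * y) * cos (k * y) ^ (q - 1) := by
    filter_upwards [hpos] with y hy
    exact (hasDerivAt_cos_mul_rpow k q y hy.ne').deriv
  have hderiv2 : HasDerivAt (fun y => -(q * k) * sin (k * y) * cos (k * y) ^ (q - 1))
      (-(q * k) * (cos (k * x) * k) * cos (k * x) ^ (q - 1) + -(q * k) * sin (k * x) *
        (-((q - 1) * k) * sin (k * x) * cos (k * x) ^ (q - 1 - 1))) x :=
    ((hasDerivAt_const_mul k).sin.const_mul _).mul (hasDerivAt_cos_mul_rpow k (q - 1) x hx.ne')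
  have hq : cos (k * x) ^ q = cos (k * x) ^ (q - 2) * cos (k * x) ^ 2 := by
    rw [← rpow_natCast, ← rpow_add hx]
    norm_num
  have hq1 : cos (k * x) ^ (q - 1) = cos (k * x) ^ (q - 2) * cos (k * x) := by
    rw [← rpow_add_one hx.ne']
    ring_nf
  rw [hderiv.deriv_eq, hderiv2.deriv, hq, hq1, show q - 1 - 1 = q - 2 by ring]
  linear_combination (q * (q - 1) * k ^ 2 * cos (k * x) ^ (q - 2)) * sin_sq_add_cos_sq (k * x)

theorem travelling_wave_eq_of_eq_cos_mul_rpow {U : ℝ → ℝ} {s : Set ℝ} {k p n C E a b g ξ : ℝ}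
    (hs : IsOpen s) (hξ : ξ ∈ s) (hb : b ≠ 0) (hcos : ∀ x ∈ s, 0 < cos (k * x))
    (hU : ∀ x, U x = C * cos (k * x) ^ p) (hV : ∀ x ∈ s, U x ^ n = E * cos (k * x) ^ (p + 2))
    (ha : b * ((p + 2) ^ 2 * k ^ 2) = a) (hg : b * E * ((p + 2) * (p + 1) * k ^ 2) = g * C) :
    -g * deriv U ξ + a * deriv (fun x => U x ^ n) ξ +
      b * deriv (deriv (deriv (fun x => U x ^ n))) ξ = 0 := by
  have hev : ∀ x ∈ s, (fun y => U y ^ n) =ᶠ[𝓝 x] fun y => E * cos (k * y) ^ (p + 2) :=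
    fun x hx => eventually_of_mem (hs.mem_nhds hx) hV
  have hV2 : ∀ x ∈ s, deriv (deriv fun y => U y ^ n) x =
      E * ((p + 2) * (p + 1) * k ^ 2 * cos (k * x) ^ p -
        (p + 2) ^ 2 * k ^ 2 * cos (k * x) ^ (p + 2)) := by
    intro x hx
    rw [(hev x hx).deriv.deriv_eq, deriv_const_mul_field', deriv_const_mul_field']
    beta_reduce
    rw [deriv_deriv_cos_mul_rpow k _ x (hcos x hx), add_sub_cancel_right]
    ring
  have hUdiff : DifferentiableAt ℝ U ξ := by
    rw [funext hU]
    exact (hasDerivAt_cos_mul_rpow k p ξ (hcos ξ hξ).ne').differentiableAt.const_mul C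
  have hVdiff : DifferentiableAt ℝ (fun y => U y ^ n) ξ :=
    ((hasDerivAt_cos_mul_rpow k (p + 2) ξ (hcos ξ hξ).ne').differentiableAt.const_mul
      E).congr_of_eventuallyEq (hev ξ hξ)
  refine third_order_eq_of_eventually_second_order_eq hb hUdiff hVdiff ?_
  filter_upwards [hs.mem_nhds hξ] with x hx
  rw [hV2 x hx, hV x hx, hU]
  linear_combination cos (k * x) ^ p * hg - (E * cos (k * x) ^ (p + 2)) * ha

theorem rpow_compacton_profile {D c : ℝ} (n : ℝ) (hD : 0 < D) (hc : 0 ≤ c) (hn : n ≠ 1) :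
    (D ^ (1 / (n - 1)) * c ^ (2 / (n - 1))) ^ n =
      D * D ^ (1 / (n - 1)) * c ^ (2 / (n - 1) + 2) := by
  have hn' : n - 1 ≠ 0 := sub_ne_zero.mpr hn
  rw [mul_rpow (rpow_nonneg hD.le _) (rpow_nonneg hc _), ← rpow_mul hD.le, ← rpow_mul hc,
    show 1 / (n - 1) * n = 1 + 1 / (n - 1) by field_simp; ring,
    show 2 / (n - 1) * n = 2 / (n - 1) + 2 by field_simp; ring, rpow_add hD, rpow_one]

theorem compacton_wavenumber_relation {n a b : ℝ} (hn : 1 < n) (ha : 0 ≤ a) (hb : 0 < b) :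
    b * ((2 / (n - 1) + 2) ^ 2 * ((n - 1) / (2 * n) * √(a / b)) ^ 2) = a := by
  have hn1 : n - 1 ≠ 0 := by linarith
  rw [mul_pow, sq_sqrt (by positivity)]
  field_simp
  ring

theorem compacton_amplitude_relation {n a b : ℝ} (g : ℝ) (hn : 1 < n) (ha : 0 < a) (hb : 0 < b) :
    b * (2 * n * g / ((n + 1) * a)) *
      ((2 / (n - 1) + 2) * (2 / (n - 1) + 1) * ((n - 1) / (2 * n) * √(a / b)) ^ 2) = g := by
  have hn1 : n - 1 ≠ 0 := by linarith
  rw [mul_pow, sq_sqrt (by positivity)]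
  field_simp
  ring

theorem compacton_half_width {n a b : ℝ} (hn : 1 < n) (ha : 0 < a) (hb : 0 < b) :
    (n - 1) / (2 * n) * √(a / b) * (n / (n - 1) * √(b / a) * π) = π / 2 := by
  have hn1 : n - 1 ≠ 0 := by linarith
  have : 0 < √a := sqrt_pos.2 ha
  have : 0 < √b := sqrt_pos.2 hb
  rw [sqrt_div ha.le, sqrt_div hb.le]
  field_simp

theorem cos_mul_pos_of_mem_Ioo {k L x : ℝ} (hk : 0 < k) (hkL : k * L = π / 2)
    (hx : x ∈ Ioo (-L) L) : 0 < cos (k * x) := by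
  apply cos_pos_of_mem_Ioo
  constructor <;> nlinarith [hx.1, hx.2]

theorem stmt_5 (n m a b g : ℝ) (hn : 1 < n) (ha : 0 < a) (hb : 0 < b) (hg : 0 < g)
    (hm : m = n)
    (U : ℝ → ℝ)
    (hU : ∀ ξ : ℝ, U ξ = (2 * n * g / ((n + 1) * a)) ^ (1 / (n - 1)) *
        Real.cos ((n - 1) / (2 * n) * Real.sqrt (a / b) * ξ) ^ (2 / (n - 1)))
    (L : ℝ) (hL : L = n / (n - 1) * Real.sqrt (b / a) * π) :
    ∀ ξ ∈ Ioo (-L) L,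
      -g * deriv U ξ + a * deriv (fun x => U x ^ m) ξ +
        b * deriv (deriv (deriv (fun x => U x ^ n))) ξ = 0 := by
  rw [hm]
  intro ξ hξ
  have hD : 0 < 2 * n * g / ((n + 1) * a) := by
    have : 0 < n := by linarith
    positivity
  have hk : 0 < (n - 1) / (2 * n) * √(a / b) := by
    have : 0 < n - 1 := by linarith
    have : 0 < √(a / b) := sqrt_pos.2 (by positivity)
    positivity
  have hcos : ∀ x ∈ Ioo (-L) L, 0 < cos ((n - 1) / (2 * n) * √(a / b) * x) := fun x hx =>
    cos_mul_pos_of_mem_Ioo hk (by rw [hL]; exact compacton_half_width hn ha hb) hx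
  refine travelling_wave_eq_of_eq_cos_mul_rpow isOpen_Ioo hξ hb.ne' hcos hU
    (fun x hx => by rw [hU, rpow_compacton_profile n hD (hcos x hx).le hn.ne'])
    (compacton_wavenumber_relation hn ha.le hb) ?_
  linear_combination (2 * n * g / ((n + 1) * a)) ^ (1 / (n - 1)) *
    compacton_amplitude_relation g hn ha hb
end

section
/- Let n > 1 and set m = (n+1)/2. With a, b, g all positive, define α = (g(3n+1)/(2a(n+1)))^{2/(n−1)}, β = a²(n+1)(n−1)²/(2gbn(3n+1)²), and U(ξ) = α(1 − βξ²)^{2/(n−1)} for ξ² ≤ 1/β. Then U satisfies the ODE −gU + aU^m + b(U^n)'' = 0 on the interval (−1/√β, 1/√β). -/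
/-!
With `t = 1 - β ξ²` and `p = 2 / (n - 1)` one has `p n = p + 2` and `p m = p + 1`, so on the
interval, where `t > 0`, `U ^ n = α ^ n t ^ (p + 2)` and `U ^ m = α ^ m t ^ (p + 1)`. Differentiating
`t ^ (p + 2)` twice yields `t ^ p` times an affine function of `ξ²`, so the whole left-hand side is
`α t ^ p` times an affine function of `ξ²`; the values of `α` and `β` are exactly those that make
both of its coefficients vanish.
-/

open Set Filter Topology

lemma hasDerivAt_one_sub_mul_sq (β x : ℝ) :
    HasDerivAt (fun y => 1 - β * y ^ 2) (-(2 * β * x)) x :=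
  (((hasDerivAt_pow 2 x).const_mul β).const_sub 1).congr_deriv (by norm_num; ring)

lemma isOpen_setOf_one_sub_mul_sq_pos (β : ℝ) : IsOpen {y : ℝ | 0 < 1 - β * y ^ 2} :=
  isOpen_lt continuous_const (by fun_prop)

lemma one_sub_mul_sq_pos_of_mem_Ioo {β ξ : ℝ} (hβ : 0 < β)
    (hξ : ξ ∈ Ioo (-(1 / Real.sqrt β)) (1 / Real.sqrt β)) : 0 < 1 - β * ξ ^ 2 := by
  have hsq : ξ ^ 2 < 1 / β := by
    simpa [div_pow, Real.sq_sqrt hβ.le] using sq_lt_sq' hξ.1 hξ.2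
  rw [lt_div_iff₀ hβ] at hsq
  linarith

lemma deriv_deriv_one_sub_mul_sq_rpow_add_two {β r x : ℝ} (hx : 0 < 1 - β * x ^ 2) :
    deriv (deriv fun y => (1 - β * y ^ 2) ^ (r + 2)) x =
      2 * β * (r + 2) * (1 - β * x ^ 2) ^ r * ((2 * r + 3) * β * x ^ 2 - 1) := by
  have hd : deriv (fun y => (1 - β * y ^ 2) ^ (r + 2)) =ᶠ[𝓝 x]
      fun y => -(2 * β * y) * (r + 2) * (1 - β * y ^ 2) ^ (r + 1) := by
    filter_upwards [(isOpen_setOf_one_sub_mul_sq_pos β).mem_nhds hx] with y hy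
    rw [((hasDerivAt_one_sub_mul_sq β y).rpow_const (Or.inl hy.ne')).deriv,
      show r + 2 - 1 = r + 1 by ring]
  have hlin : HasDerivAt (fun y : ℝ => -(2 * β * y) * (r + 2)) (-(2 * β) * (r + 2)) x := by
    simpa using (((hasDerivAt_id x).const_mul (2 * β)).neg).mul_const (r + 2)
  have hpow := (hasDerivAt_one_sub_mul_sq β x).rpow_const (p := r + 1) (Or.inl hx.ne')
  rw [hd.deriv_eq, (hlin.fun_mul hpow).deriv, add_sub_cancel_right, Real.rpow_add_one hx.ne']
  ring

lemma deriv_deriv_mul_one_sub_mul_sq_rpow_rpow {c β p e x : ℝ} (hc : 0 ≤ c)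
    (he : p * e = p + 2) (hx : 0 < 1 - β * x ^ 2) :
    deriv (deriv fun y => (c * (1 - β * y ^ 2) ^ p) ^ e) x =
      c ^ e * (2 * β * (p + 2) * (1 - β * x ^ 2) ^ p * ((2 * p + 3) * β * x ^ 2 - 1)) := by
  have heq : (fun y => (c * (1 - β * y ^ 2) ^ p) ^ e) =ᶠ[𝓝 x]
      fun y => c ^ e * (1 - β * y ^ 2) ^ (p + 2) := by
    filter_upwards [(isOpen_setOf_one_sub_mul_sq_pos β).mem_nhds hx] with y hy
    rw [Real.mul_rpow hc (Real.rpow_nonneg hy.le _), ← Real.rpow_mul hy.le, he]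
  rw [heq.deriv.deriv_eq, deriv_const_mul_field', deriv_const_mul_field,
    deriv_deriv_one_sub_mul_sq_rpow_add_two hx]

lemma two_div_sub_one_mul_self {n : ℝ} (hn : n ≠ 1) : 2 / (n - 1) * n = 2 / (n - 1) + 2 := by
  have : n - 1 ≠ 0 := sub_ne_zero.mpr hn
  field_simp
  ring

lemma two_div_sub_one_mul_half_add_one {n : ℝ} (hn : n ≠ 1) :
    2 / (n - 1) * ((n + 1) / 2) = 2 / (n - 1) + 1 := by
  have : n - 1 ≠ 0 := sub_ne_zero.mpr hn
  field_simp
  ring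

theorem stmt_7 (n m a b g : ℝ) (hn : 1 < n) (hm : m = (n + 1) / 2)
    (ha : 0 < a) (hb : 0 < b) (hg : 0 < g)
    (α β : ℝ)
    (hα : α = (g * (3 * n + 1) / (2 * a * (n + 1))) ^ (2 / (n - 1)))
    (hβ : β = a ^ 2 * (n + 1) * (n - 1) ^ 2 / (2 * g * b * n * (3 * n + 1) ^ 2))
    (U : ℝ → ℝ)
    (hU : ∀ ξ : ℝ, U ξ = α * (1 - β * ξ ^ 2) ^ (2 / (n - 1))) :
    ∀ ξ ∈ Ioo (-(1 / Real.sqrt β)) (1 / Real.sqrt β),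
      -g * U ξ + a * U ξ ^ m + b * deriv (deriv (fun x => U x ^ n)) ξ = 0 := by
  intro ξ hξ
  obtain rfl : U = fun ξ => α * (1 - β * ξ ^ 2) ^ (2 / (n - 1)) := funext hU
  set p := 2 / (n - 1) with hp
  set K := g * (3 * n + 1) / (2 * a * (n + 1)) with hK
  have hn0 : 0 < n := by linarith
  have hK0 : 0 < K := by positivity
  have hn1 : 0 < n - 1 := by linarith
  have hβ0 : 0 < β := by
    rw [hβ]
    exact div_pos (mul_pos (mul_pos (pow_pos ha 2) (by linarith)) (pow_pos hn1 2)) (by positivity)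
  have ht := one_sub_mul_sq_pos_of_mem_Ioo hβ0 hξ
  have hα0 : 0 ≤ α := hα ▸ Real.rpow_nonneg hK0.le _
  have hαm : α ^ m = α * K := by
    rw [hα, hm, ← Real.rpow_mul hK0.le, two_div_sub_one_mul_half_add_one hn.ne',
      Real.rpow_add_one hK0.ne']
  have hαn : α ^ n = α * K ^ 2 := by
    rw [hα, ← Real.rpow_mul hK0.le, two_div_sub_one_mul_self hn.ne',
      Real.rpow_add hK0, Real.rpow_two]
  have hUm : (α * (1 - β * ξ ^ 2) ^ p) ^ m = α * K * ((1 - β * ξ ^ 2) ^ p * (1 - β * ξ ^ 2)) := by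
    rw [Real.mul_rpow hα0 (Real.rpow_nonneg ht.le _), hαm, ← Real.rpow_mul ht.le, hm,
      two_div_sub_one_mul_half_add_one hn.ne', Real.rpow_add_one ht.ne']
  have hcoeff : -g + a * K * (1 - β * ξ ^ 2)
      + 2 * b * K ^ 2 * β * (p + 2) * ((2 * p + 3) * β * ξ ^ 2 - 1) = 0 := by
    rw [hβ, hK, hp]
    field_simp
    ring
  beta_reduce
  rw [hUm, deriv_deriv_mul_one_sub_mul_sq_rpow_rpow hα0 (two_div_sub_one_mul_self hn.ne') ht, hαn]
  linear_combination α * (1 - β * ξ ^ 2) ^ p * hcoeff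
end

section
/- Let 1 < n < 2, m = 2 − n, a > 0, g > 0, b < 0. Define U(ξ) = (a(n+1)/(2g))^{1/(n−1)} · (1 + g²(n−1)²/(abn(n+1)²) · ξ²)^{1/(n−1)}. Then U satisfies −gU + aU^{2−n} + b(U^n)'' = 0 for all ξ with |ξ| < L = (n+1)√(n|ab|)/((n−1)g), and U(±L) = 0. -/
open Set Topology Real

/-!
Write `p = 1/(n-1)`, `c = a(n+1)/(2g)` and `d = c·g²(n-1)²/(abn(n+1)²) = g(n-1)²/(2bn(n+1))`.
Where `X = c + dξ²` is nonnegative, `U = X^p`, hence `U^n = X^(p+1)` and `U^(2-n) = X^(p-1)`.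
Since `(X^q)'' = 2dq X^(q-2) ((2q-1)X - 2(q-1)c)`, dividing the equation by `X^(p-1)` leaves an
affine identity in `X` whose two coefficients vanish for exactly this `c` and `d`.
The edge `L` is the root of `X`.
-/

theorem hasDerivAt_add_mul_sq_rpow {c d q x : ℝ} (hx : c + d * x ^ 2 ≠ 0) :
    HasDerivAt (fun y => (c + d * y ^ 2) ^ q) (2 * d * q * x * (c + d * x ^ 2) ^ (q - 1)) x := by
  have hquad : HasDerivAt (fun y => c + d * y ^ 2) (2 * d * x) x := by
    refine (((hasDerivAt_pow 2 x).const_mul d).const_add c).congr_deriv ?_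
    norm_num
    ring
  convert hquad.rpow_const (p := q) (Or.inl hx) using 1
  ring

theorem deriv_deriv_add_mul_sq_rpow {c d q x : ℝ} (hx : c + d * x ^ 2 ≠ 0) :
    deriv (deriv fun y => (c + d * y ^ 2) ^ q) x =
      2 * d * q * (c + d * x ^ 2) ^ (q - 2) *
        ((2 * q - 1) * (c + d * x ^ 2) - 2 * (q - 1) * c) := by
  have hnear : ∀ᶠ y in 𝓝 x, c + d * y ^ 2 ≠ 0 :=
    (show ContinuousAt (fun y => c + d * y ^ 2) x by fun_prop).eventually_ne hx
  have hderiv : deriv (fun y => (c + d * y ^ 2) ^ q) =ᶠ[𝓝 x]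
      fun y => 2 * d * q * (y * (c + d * y ^ 2) ^ (q - 1)) :=
    hnear.mono fun y hy => (hasDerivAt_add_mul_sq_rpow hy).deriv.trans (by ring)
  rw [hderiv.deriv_eq,
    (((hasDerivAt_id' x).fun_mul (hasDerivAt_add_mul_sq_rpow (q := q - 1) hx)).const_mul _).deriv,
    show q - 1 - 1 = q - 2 by ring, show q - 1 = q - 2 + 1 by ring, rpow_add_one hx]
  ring

theorem compacton_amplitude_mul_quadratic {n a b g c d : ℝ} (hn : 1 < n) (ha : a ≠ 0)
    (hg : g ≠ 0) (hc : c = a * (n + 1) / (2 * g))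
    (hd : d = g * (n - 1) ^ 2 / (2 * b * n * (n + 1))) (ξ : ℝ) :
    c + d * ξ ^ 2 = c * (1 + g ^ 2 * (n - 1) ^ 2 / (a * b * n * (n + 1) ^ 2) * ξ ^ 2) := by
  have : n ≠ 0 := by linarith
  have : n + 1 ≠ 0 := by linarith
  subst hc hd
  field_simp

theorem compacton_reduced_ode {n a b g p c d : ℝ} (hn : 1 < n) (hb : b ≠ 0) (hg : g ≠ 0)
    (hp : p = 1 / (n - 1)) (hc : c = a * (n + 1) / (2 * g))
    (hd : d = g * (n - 1) ^ 2 / (2 * b * n * (n + 1))) (X : ℝ) :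
    -g * X + a + b * (2 * d * (p + 1) * ((2 * p + 1) * X - 2 * p * c)) = 0 := by
  have : n - 1 ≠ 0 := by linarith
  have : n ≠ 0 := by linarith
  have : n + 1 ≠ 0 := by linarith
  subst hp hc hd
  field_simp
  ring

theorem compacton_quadratic_edge_eq_zero {n a b g c d L : ℝ} (hn : 1 < n) (hab : a * b < 0)
    (hg : g ≠ 0)
    (hc : c = a * (n + 1) / (2 * g)) (hd : d = g * (n - 1) ^ 2 / (2 * b * n * (n + 1)))
    (hL : L = (n + 1) * √(n * |a * b|) / ((n - 1) * g)) :
    c + d * L ^ 2 = 0 := by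
  have : n - 1 ≠ 0 := by linarith
  have : n ≠ 0 := by linarith
  have : n + 1 ≠ 0 := by linarith
  have : b ≠ 0 := by rintro rfl; simp at hab
  have hsq : √(n * |a * b|) ^ 2 = -(n * (a * b)) := by
    rw [sq_sqrt (by positivity), abs_of_neg hab]
    ring
  subst hc hd hL
  rw [div_pow, mul_pow, hsq]
  field_simp
  ring

theorem compacton_ode_of_eventuallyEq_rpow {n p a b g c d x : ℝ} {U : ℝ → ℝ}
    (hpn : p * n = p + 1) (hx : 0 < c + d * x ^ 2)
    (hU : ∀ᶠ y in 𝓝 x, U y = (c + d * y ^ 2) ^ p)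
    (hred : -g * (c + d * x ^ 2) + a +
      b * (2 * d * (p + 1) * ((2 * p + 1) * (c + d * x ^ 2) - 2 * p * c)) = 0) :
    -g * U x + a * U x ^ (2 - n) + b * deriv (deriv fun y => U y ^ n) x = 0 := by
  have hpos : ∀ᶠ y in 𝓝 x, 0 < c + d * y ^ 2 :=
    continuousAt_const.eventually_lt (by fun_prop) hx
  have hUn : (fun y => U y ^ n) =ᶠ[𝓝 x] fun y => (c + d * y ^ 2) ^ (p + 1) := by
    filter_upwards [hU, hpos] with y hUy hy
    rw [hUy, ← rpow_mul hy.le, hpn]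
  have hXp : (c + d * x ^ 2) ^ p = (c + d * x ^ 2) ^ (p - 1) * (c + d * x ^ 2) := by
    rw [← rpow_add_one hx.ne', sub_add_cancel]
  rw [hUn.deriv.deriv_eq, deriv_deriv_add_mul_sq_rpow hx.ne', hU.self_of_nhds, ← rpow_mul hx.le,
    show p * (2 - n) = p - 1 by linear_combination -hpn, show p + 1 - 2 = p - 1 by ring]
  linear_combination (c + d * x ^ 2) ^ (p - 1) * hred - g * hXp

theorem stmt_8_general (n a b g : ℝ) (hn1 : 1 < n)
    (ha : 0 < a) (hg : 0 < g) (hb : b < 0)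
    (U : ℝ → ℝ)
    (hU : ∀ ξ : ℝ, U ξ = (a * (n + 1) / (2 * g)) ^ (1 / (n - 1)) *
        (1 + g ^ 2 * (n - 1) ^ 2 / (a * b * n * (n + 1) ^ 2) * ξ ^ 2) ^ (1 / (n - 1)))
    (L : ℝ) (hL : L = (n + 1) * Real.sqrt (n * |a * b|) / ((n - 1) * g)) :
    (∀ ξ ∈ Ioo (-L) L,
      -g * U ξ + a * U ξ ^ (2 - n) + b * deriv (deriv (fun x => U x ^ n)) ξ = 0) ∧
    U L = 0 ∧ U (-L) = 0 := by
  set c := a * (n + 1) / (2 * g) with hc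
  set p := 1 / (n - 1) with hp
  set d := g * (n - 1) ^ 2 / (2 * b * n * (n + 1)) with hd
  have hc_pos : 0 < c := by positivity
  have hedge : c + d * L ^ 2 = 0 :=
    compacton_quadratic_edge_eq_zero hn1 (mul_neg_of_pos_of_neg ha hb) hg.ne' hc hd hL
  have hd_neg : d < 0 := by nlinarith [sq_nonneg L]
  have hUX : ∀ ξ, 0 ≤ c + d * ξ ^ 2 → U ξ = (c + d * ξ ^ 2) ^ p := by
    intro ξ hξ
    rw [compacton_amplitude_mul_quadratic hn1 ha.ne' hg.ne' hc hd] at hξ ⊢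
    rw [hU, mul_rpow hc_pos.le ((mul_nonneg_iff_of_pos_left hc_pos).mp hξ)]
  have hvanish : ∀ ξ, ξ ^ 2 = L ^ 2 → U ξ = 0 := fun ξ hξ => by
    rw [hUX ξ (by rw [hξ, hedge]), hξ, hedge, zero_rpow (one_div_pos.mpr (by linarith)).ne']
  have hinside : ∀ ξ ∈ Ioo (-L) L, 0 < c + d * ξ ^ 2 := fun ξ hξ => by
    nlinarith [mul_lt_mul_of_neg_left (sq_lt_sq' hξ.1 hξ.2) hd_neg]
  refine ⟨fun ξ hξ => ?_, hvanish L rfl, hvanish (-L) (neg_sq L)⟩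
  refine compacton_ode_of_eventuallyEq_rpow ?_ (hinside ξ hξ) ?_
    (compacton_reduced_ode hn1 hb.ne hg.ne' hp hc hd _)
  · rw [hp]
    field_simp [show n - 1 ≠ 0 by linarith]
    ring
  · filter_upwards [isOpen_Ioo.mem_nhds hξ] with y hy using hUX y (hinside y hy).le

theorem stmt_8 (n m a b g : ℝ) (hn1 : 1 < n) (hn2 : n < 2) (hm : m = 2 - n)
    (ha : 0 < a) (hg : 0 < g) (hb : b < 0)
    (U : ℝ → ℝ)
    (hU : ∀ ξ : ℝ, U ξ = (a * (n + 1) / (2 * g)) ^ (1 / (n - 1)) *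
        (1 + g ^ 2 * (n - 1) ^ 2 / (a * b * n * (n + 1) ^ 2) * ξ ^ 2) ^ (1 / (n - 1)))
    (L : ℝ) (hL : L = (n + 1) * Real.sqrt (n * |a * b|) / ((n - 1) * g)) :
    (∀ ξ ∈ Ioo (-L) L,
      -g * U ξ + a * U ξ ^ (2 - n) + b * deriv (deriv (fun x => U x ^ n)) ξ = 0) ∧
    U L = 0 ∧ U (-L) = 0 :=
  stmt_8_general n a b g hn1 ha hg hb U hU L hL
end
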